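/- arXiv:2104.14445 — 4 statements merged into one kernel-verified Lean document; each statement's English description precedes it below -/
import Mathlib

section
/- Pigeonhole principle for relations without discreteness: Let R : X → Y → Prop be a binary relation, and let l : List X and m : List Y be lists with m.length < l.length. If R is total from l to m (for every x ∈ l there exists y ∈ m with R x y), then there exist x₁, x₂ occurring at two distinct positions of l (i.e., l = l₁ ++ x₁ :: l₂ ++ x₂ :: l₃ for some l₁ l₂ l₃) and some y ∈ m such that R x₁ y and R x₂ y. -/
lemma php_split {X : Type} (l : List X) (i j : ℕ) (hij : i < j) (hj : j < l.length) :
    ∃ l₁ l₂ l₃, l = l₁ ++ l[i]'(hij.trans hj) :: l₂ ++ l[j] :: l₃ := by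
  refine ⟨l.take i, (l.drop (i+1)).take (j - (i+1)), l.drop (j+1), ?_⟩
  have h1 : l = l.take i ++ l[i]'(hij.trans hj) :: l.drop (i+1) := by
    rw [List.getElem_cons_drop, List.take_append_drop]
  have h2 : l.drop (i+1) =
      (l.drop (i+1)).take (j - (i+1)) ++ l[j] :: l.drop (j+1) := by
    conv_lhs => rw [← List.take_append_drop (j - (i+1)) (l.drop (i+1))]
    congr 1
    rw [List.drop_drop, Nat.add_sub_cancel' hij, List.getElem_cons_drop]
  conv_lhs => rw [h1, h2]
  simp

/-- Pigeonhole principle for relations, without discreteness assumptions. -/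
theorem php_rel {X Y : Type} (R : X → Y → Prop) (l : List X) (m : List Y)
    (hlen : m.length < l.length)
    (htot : ∀ x ∈ l, ∃ y ∈ m, R x y) :
    ∃ (x₁ x₂ : X) (l₁ l₂ l₃ : List X) (y : Y),
      l = l₁ ++ x₁ :: l₂ ++ x₂ :: l₃ ∧ y ∈ m ∧ R x₁ y ∧ R x₂ y := by
  classical
  have hf : ∀ i : Fin l.length, ∃ j : Fin m.length, R l[(i:ℕ)] m[(j:ℕ)] := by
    intro i
    obtain ⟨y, hy, hr⟩ := htot l[(i:ℕ)] (l.getElem_mem i.isLt)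
    obtain ⟨j, hj⟩ := List.get_of_mem hy
    exact ⟨j, by rw [← hj] at hr; simpa using hr⟩
  choose f hfR using hf
  obtain ⟨i₁, i₂, hne, heq⟩ :=
    Fintype.exists_ne_map_eq_of_card_lt f (by simpa using hlen)
  rcases lt_or_gt_of_ne (fun h => hne (Fin.ext h) : (i₁:ℕ) ≠ (i₂:ℕ)) with h | h
  · obtain ⟨l₁, l₂, l₃, hl⟩ := php_split l i₁ i₂ h i₂.isLt
    exact ⟨_, _, l₁, l₂, l₃, m[(f i₁ : ℕ)], hl,
      List.getElem_mem _, hfR i₁, heq ▸ hfR i₂⟩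
  · obtain ⟨l₁, l₂, l₃, hl⟩ := php_split l i₂ i₁ h i₁.isLt
    exact ⟨_, _, l₁, l₂, l₃, m[(f i₁ : ℕ)], hl,
      List.getElem_mem _, heq ▸ hfR i₂, hfR i₁⟩
end

section
/- Weak powerset: For every finite type X one can compute a list ll : List (X → Prop) such that for every predicate p : X → Prop satisfying ∀ x, p x ∨ ¬ p x, there exists q ∈ ll with ∀ x, p x ↔ q x. Moreover such a list can be chosen with length 2^(length of the enumerating list of X). -/
theorem weak_powerset_aux {X : Type} (l : List X) :
    ∃ ll : List (X → Prop), ll.length = 2 ^ l.length ∧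
      ∀ p : X → Prop, (∀ x, p x ∨ ¬ p x) → ∃ q ∈ ll, ∀ x ∈ l, (p x ↔ q x) := by
  induction l with
  | nil =>
    exact ⟨[fun _ => False], rfl, fun p _ => ⟨_, List.mem_singleton.2 rfl, by simp⟩⟩
  | cons a l ih =>
    obtain ⟨ll, hlen, hll⟩ := ih
    refine ⟨ll.map (fun q x => q x ∧ x ≠ a) ++ ll.map (fun q x => q x ∨ x = a),
      by simp [hlen, List.length_cons, pow_succ]; ring, ?_⟩
    intro p hp
    obtain ⟨q, hq, hq2⟩ := hll p hp
    rcases hp a with hpa | hpa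
    · refine ⟨fun x => q x ∨ x = a, List.mem_append_right _ (List.mem_map.2 ⟨q, hq, rfl⟩), ?_⟩
      intro x hx
      rcases List.mem_cons.1 hx with rfl | hx
      · exact ⟨fun _ => Or.inr rfl, fun _ => hpa⟩
      · constructor
        · intro h; exact Or.inl ((hq2 x hx).1 h)
        · rintro (h | rfl)
          · exact (hq2 x hx).2 h
          · exact hpa
    · refine ⟨fun x => q x ∧ x ≠ a, List.mem_append_left _ (List.mem_map.2 ⟨q, hq, rfl⟩), ?_⟩
      intro x hx
      rcases List.mem_cons.1 hx with rfl | hx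
      · exact ⟨fun h => absurd h hpa, fun h => absurd rfl h.2⟩
      · constructor
        · intro h
          exact ⟨(hq2 x hx).1 h, fun he => hpa (he ▸ h)⟩
        · intro h; exact (hq2 x hx).2 h.1

/-- Weak powerset: for a finite type `X` (enumerated by `lX`) there is a list of
predicates of length `2 ^ lX.length` containing every weakly decidable predicate
up to extensional equivalence. -/
theorem weak_powerset {X : Type} (lX : List X) (hl : ∀ x : X, x ∈ lX) :
    ∃ ll : List (X → Prop), ll.length = 2 ^ lX.length ∧
      ∀ p : X → Prop, (∀ x, p x ∨ ¬ p x) → ∃ q ∈ ll, ∀ x, p x ↔ q x := by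
  obtain ⟨ll, hlen, hll⟩ := weak_powerset_aux lX
  exact ⟨ll, hlen, fun p hp => by
    obtain ⟨q, hq, hq2⟩ := hll p hp
    exact ⟨q, hq, fun x => hq2 x (hl x)⟩⟩
end

section
/- Finite satisfiability is invariant under requiring discreteness of the domain: a first-order formula φ over a signature Σ has a finite decidable model if and only if it has a finite decidable model whose domain has decidable equality (indeed, a model with domain Fin n for some n). -/
/-- A first-order signature: function and relation symbols with arities. -/
structure Sig where
  F : Type
  P : Type
  arF : F → Nat
  arP : P → Nat

/-- First-order terms over a signature (de Bruijn variables). -/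
inductive Tm (S : Sig) : Type where
  | var : Nat → Tm S
  | func : (f : S.F) → (Fin (S.arF f) → Tm S) → Tm S

/-- First-order formulas over a signature (de Bruijn binders). -/
inductive Fml (S : Sig) : Type where
  | fal : Fml S
  | atom : (P : S.P) → (Fin (S.arP P) → Tm S) → Fml S
  | imp : Fml S → Fml S → Fml S
  | conj : Fml S → Fml S → Fml S
  | disj : Fml S → Fml S → Fml S
  | all : Fml S → Fml S
  | ex : Fml S → Fml S

/-- A model: interpretations of function and relation symbols over a domain. -/
structure Model (S : Sig) (D : Type) where
  fi : (f : S.F) → (Fin (S.arF f) → D) → D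
  pi : (P : S.P) → (Fin (S.arP P) → D) → Prop

/-- Evaluation of terms under an assignment. -/
def evalTm {S : Sig} {D : Type} (M : Model S D) (ρ : Nat → D) : Tm S → D
  | .var x => ρ x
  | .func f v => M.fi f (fun i => evalTm M ρ (v i))

/-- de Bruijn extension of an assignment by a value. -/
def scons {D : Type} (a : D) (ρ : Nat → D) : Nat → D
  | 0 => a
  | n + 1 => ρ n

/-- Tarski satisfaction. -/
def Sat {S : Sig} {D : Type} (M : Model S D) : (Nat → D) → Fml S → Prop
  | _, .fal => False
  | ρ, .atom P v => M.pi P (fun i => evalTm M ρ (v i))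
  | ρ, .imp φ ψ => Sat M ρ φ → Sat M ρ ψ
  | ρ, .conj φ ψ => Sat M ρ φ ∧ Sat M ρ ψ
  | ρ, .disj φ ψ => Sat M ρ φ ∨ Sat M ρ ψ
  | ρ, .all φ => ∀ a : D, Sat M (scons a ρ) φ
  | ρ, .ex φ => ∃ a : D, Sat M (scons a ρ) φ

/-- All relation symbols are interpreted decidably (by Boolean functions). -/
def DecRels {S : Sig} {D : Type} (M : Model S D) : Prop :=
  ∀ P : S.P, ∃ g : (Fin (S.arP P) → D) → Bool, ∀ v, M.pi P v ↔ g v = true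

/-- Finite satisfiability: a finite decidable model. -/
def FSAT (S : Sig) (φ : Fml S) : Prop :=
  ∃ (D : Type) (l : List D) (M : Model S D) (ρ : Nat → D),
    (∀ x : D, x ∈ l) ∧ DecRels M ∧ Sat M ρ φ

/-- Finite satisfiability over a discrete domain. -/
def FSAT' (S : Sig) (φ : Fml S) : Prop :=
  ∃ (D : Type) (_ : DecidableEq D) (l : List D) (M : Model S D) (ρ : Nat → D),
    (∀ x : D, x ∈ l) ∧ DecRels M ∧ Sat M ρ φ

/-- Function symbols occurring in a term. -/
def tmF {S : Sig} : Tm S → List S.F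
  | .var _ => []
  | .func f v => f :: (List.finRange (S.arF f)).flatMap (fun i => tmF (v i))

/-- Function symbols occurring in a formula. -/
def frmF {S : Sig} : Fml S → List S.F
  | .fal => []
  | .atom _ v => (List.finRange _).flatMap (fun i => tmF (v i))
  | .imp φ ψ => frmF φ ++ frmF ψ
  | .conj φ ψ => frmF φ ++ frmF ψ
  | .disj φ ψ => frmF φ ++ frmF ψ
  | .all φ => frmF φ
  | .ex φ => frmF φ

/-- Relation symbols occurring in a formula. -/
def frmP {S : Sig} : Fml S → List S.P
  | .fal => []
  | .atom P _ => [P]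
  | .imp φ ψ => frmP φ ++ frmP ψ
  | .conj φ ψ => frmP φ ++ frmP ψ
  | .disj φ ψ => frmP φ ++ frmP ψ
  | .all φ => frmP φ
  | .ex φ => frmP φ

/-- Transfer a model along a surjection with section onto `Fin n`. -/
def liftMod {S : Sig} {D : Type} {n : ℕ} (M : Model S D) (f : Fin n → D) (g : D → Fin n) :
    Model S (Fin n) where
  fi := fun F v => g (M.fi F (fun i => f (v i)))
  pi := fun P v => M.pi P (fun i => f (v i))

lemma evalTm_lift {S : Sig} {D : Type} {n : ℕ} (M : Model S D) (f : Fin n → D) (g : D → Fin n)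
    (hfg : ∀ d, f (g d) = d) (t : Tm S) (ρ' : Nat → Fin n) :
    f (evalTm (liftMod M f g) ρ' t) = evalTm M (f ∘ ρ') t := by
  induction t with
  | var x => rfl
  | func F v ih =>
    simp only [evalTm, liftMod, hfg]
    congr 1
    funext i
    exact ih i

lemma scons_comp {D E : Type} (f : D → E) (a : D) (ρ : Nat → D) :
    f ∘ scons a ρ = scons (f a) (f ∘ ρ) := by
  funext x; cases x <;> rfl

lemma sat_lift {S : Sig} {D : Type} {n : ℕ} (M : Model S D) (f : Fin n → D) (g : D → Fin n)
    (hfg : ∀ d, f (g d) = d) (ψ : Fml S) (ρ' : Nat → Fin n) :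
    Sat (liftMod M f g) ρ' ψ ↔ Sat M (f ∘ ρ') ψ := by
  induction ψ generalizing ρ' with
  | fal => rfl
  | atom P v =>
    have key : (fun i => f (evalTm (liftMod M f g) ρ' (v i))) =
        fun i => evalTm M (f ∘ ρ') (v i) := by
      funext i; exact evalTm_lift M f g hfg (v i) ρ'
    show M.pi P (fun i => f (evalTm (liftMod M f g) ρ' (v i))) ↔ _
    rw [key]
    rfl
  | imp φ ψ ih1 ih2 => exact imp_congr (ih1 ρ') (ih2 ρ')
  | conj φ ψ ih1 ih2 => exact and_congr (ih1 ρ') (ih2 ρ')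
  | disj φ ψ ih1 ih2 => exact or_congr (ih1 ρ') (ih2 ρ')
  | all φ ih =>
    constructor
    · intro h d
      have := (ih (scons (g d) ρ')).mp (h (g d))
      rwa [scons_comp, hfg] at this
    · intro h a
      rw [ih, scons_comp]
      exact h (f a)
  | ex φ ih =>
    constructor
    · rintro ⟨a, ha⟩
      exact ⟨f a, by rw [← scons_comp]; exact (ih _).mp ha⟩
    · rintro ⟨d, hd⟩
      refine ⟨g d, (ih _).mpr ?_⟩
      rwa [scons_comp, hfg]

lemma fsat_to_fin {S : Sig} (φ : Fml S) (h : FSAT S φ) :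
    ∃ (n : ℕ) (M : Model S (Fin n)) (ρ : Nat → Fin n), DecRels M ∧ Sat M ρ φ := by
  classical
  obtain ⟨D, l, M, ρ, hl, hdec, hsat⟩ := h
  set n := l.length with hn
  have hD : ∀ d : D, ∃ i : Fin n, l.get i = d := by
    intro d
    obtain ⟨i, hi⟩ := List.get_of_mem (hl d)
    exact ⟨i, hi⟩
  let f : Fin n → D := l.get
  let g : D → Fin n := fun d => (hD d).choose
  have hfg : ∀ d, f (g d) = d := fun d => (hD d).choose_spec
  refine ⟨n, liftMod M f g, fun k => g (ρ k), ?_, ?_⟩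
  · intro P
    obtain ⟨b, hb⟩ := hdec P
    exact ⟨fun v => b (fun i => f (v i)), fun v => hb _⟩
  · rw [sat_lift M f g hfg]
    have : f ∘ (fun k => g (ρ k)) = ρ := by funext k; exact hfg _
    rwa [this]

/-- Finite satisfiability is invariant under requiring discreteness of the
domain; indeed a domain of the form `Fin n` can always be achieved. -/
theorem fsat_iff_fsat_discrete {S : Sig} (φ : Fml S) :
    (FSAT S φ ↔ FSAT' S φ) ∧
    (FSAT S φ ↔ ∃ (n : ℕ) (M : Model S (Fin n)) (ρ : Nat → Fin n),
        DecRels M ∧ Sat M ρ φ) := by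
  have h2 : (∃ (n : ℕ) (M : Model S (Fin n)) (ρ : Nat → Fin n),
      DecRels M ∧ Sat M ρ φ) → FSAT' S φ := by
    rintro ⟨n, M, ρ, hdec, hsat⟩
    exact ⟨Fin n, inferInstance, List.finRange n, M, ρ,
      fun x => List.mem_finRange x, hdec, hsat⟩
  have h3 : FSAT' S φ → FSAT S φ := by
    rintro ⟨D, _, l, M, ρ, hl, hdec, hsat⟩
    exact ⟨D, l, M, ρ, hl, hdec, hsat⟩
  constructor
  · exact ⟨fun h => h2 (fsat_to_fin φ h), h3⟩
  · exact ⟨fsat_to_fin φ, fun h => h3 (h2 h)⟩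
end

section
/- Hereditarily finite set encoding of an n-ary relation: given a decidable n-ary relation R : X^n → Prop on a finite, discrete, inhabited type X, one can compute a finite type Y with a decidable binary relation ∈ : Y → Y → Prop, distinguished elements d, r : Y, and maps i : X → Y and s : Y → X such that (1) i x ∈ d for all x : X, (2) every y ∈ d equals i x for some x, and (3) for every vector v : X^n, R v holds iff the Kuratowski-encoded n-tuple (i v₁, …, i vₙ) is a member of r. -/
/-- Extensional identity with respect to an abstract membership relation. -/
def ExtEq {Y : Type} (mem : Y → Y → Prop) (x y : Y) : Prop :=
  ∀ z : Y, mem z x ↔ mem z y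

/-- `p` represents the unordered pair `{x, y}`. -/
def IsPair {Y : Type} (mem : Y → Y → Prop) (p x y : Y) : Prop :=
  ∀ a : Y, mem a p ↔ ExtEq mem a x ∨ ExtEq mem a y

/-- `p` represents the Kuratowski ordered pair `(x, y) = {{x}, {x, y}}`. -/
def IsOPair {Y : Type} (mem : Y → Y → Prop) (p x y : Y) : Prop :=
  ∃ a b : Y, IsPair mem a x x ∧ IsPair mem b x y ∧ IsPair mem p a b

/-- `t` represents the tuple `v` (as iterated Kuratowski pairs). -/
def IsTuple {Y : Type} (mem : Y → Y → Prop) : Y → List Y → Prop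
  | t, [] => ∀ a : Y, ¬ mem a t
  | t, x :: v => ∃ p : Y, IsOPair mem t x p ∧ IsTuple mem p v

/-- The encoded tuple `v` is a member of `r`. -/
def TupleIn {Y : Type} (mem : Y → Y → Prop) (v : List Y) (r : Y) : Prop :=
  ∃ t : Y, IsTuple mem t v ∧ mem t r


/-!
Hereditarily finite sets are coded by natural numbers à la Ackermann: `k ∈ m` iff bit `k` of `m`
is set. Since `k ∈ m` forces `k < m`, every initial segment `Fin N` of ℕ is a transitive set, so
on it extensional equality is equality and the abstract pairs and tuples are exactly the Ackermann
codes of Kuratowski pairs and tuples. The atoms of `X` are coded injectively by small numbers,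
`d` is the code of the set of atoms, `r` the code of the set of tuple codes of `R`, and `N` is
taken beyond both.
-/

lemma Nat.lt_of_testBit_eq_true {m k : ℕ} (h : m.testBit k = true) : k < m :=
  Nat.lt_two_pow_self.trans_le (Nat.ge_two_pow_of_testBit h)

lemma Nat.eq_of_testBit_eq_of_lt {a b N : ℕ} (ha : ∀ k, a.testBit k = true → k < N)
    (hb : ∀ k, b.testBit k = true → k < N) (h : ∀ k < N, a.testBit k = b.testBit k) :
    a = b := by
  refine Nat.eq_of_testBit_eq fun k => ?_
  by_cases hk : k < N
  · exact h k hk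
  · rw [Bool.eq_false_iff.2 fun h' => hk (ha k h'), Bool.eq_false_iff.2 fun h' => hk (hb k h')]

def ackSet : List ℕ → ℕ
  | [] => 0
  | x :: l => 2 ^ x ||| ackSet l

@[simp]
lemma testBit_ackSet {L : List ℕ} {k : ℕ} : (ackSet L).testBit k = true ↔ k ∈ L := by
  induction L with
  | nil => simp [ackSet]
  | cons a L ih =>
    simp only [ackSet, Nat.testBit_or, Nat.testBit_two_pow, Bool.or_eq_true, decide_eq_true_eq,
      ih, List.mem_cons]
    tauto

lemma ackSet_inj {L L' : List ℕ} : ackSet L = ackSet L' ↔ ∀ k, k ∈ L ↔ k ∈ L' := by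
  refine ⟨fun h k => by rw [← testBit_ackSet, h, testBit_ackSet], fun h => ?_⟩
  exact Nat.eq_of_testBit_eq fun k => Bool.eq_iff_iff.2 (by simp only [testBit_ackSet, h])

def ackPair (x y : ℕ) : ℕ := ackSet [x, y]

@[simp]
lemma testBit_ackPair {x y k : ℕ} : (ackPair x y).testBit k = true ↔ k = x ∨ k = y := by
  simp [ackPair]

lemma ackPair_inj {x y x' y' : ℕ} :
    ackPair x y = ackPair x' y' ↔ x = x' ∧ y = y' ∨ x = y' ∧ y = x' := by
  rw [ackPair, ackPair, ackSet_inj, ← Set.pair_eq_pair_iff, Set.ext_iff]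
  simp

def ackOPair (x y : ℕ) : ℕ := ackPair (ackPair x x) (ackPair x y)

lemma ackOPair_inj {x y x' y' : ℕ} (h : ackOPair x y = ackOPair x' y') : x = x' ∧ y = y' := by
  simp only [ackOPair, ackPair_inj] at h
  omega

lemma ackOPair_ne_zero (x y : ℕ) : ackOPair x y ≠ 0 := fun h => by
  simpa using (ackSet_inj (L := [ackPair x x, ackPair x y]) (L' := [])).1 h (ackPair x x)

def ackTuple : List ℕ → ℕ
  | [] => 0
  | x :: l => ackOPair x (ackTuple l)

lemma ackTuple_injective : Function.Injective ackTuple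
  | [], [], _ => rfl
  | [], _ :: _, h => (ackOPair_ne_zero _ _ h.symm).elim
  | _ :: _, [], h => (ackOPair_ne_zero _ _ h).elim
  | _ :: _, _ :: _, h => by
    obtain ⟨rfl, h'⟩ := ackOPair_inj h
    rw [ackTuple_injective h']

def finMem (N : ℕ) (a b : Fin N) : Prop := b.1.testBit a.1 = true

section

variable {N : ℕ}

lemma Fin.lt_of_testBit_eq_true (t : Fin N) {k : ℕ} (h : t.1.testBit k = true) : k < N :=
  (Nat.lt_of_testBit_eq_true h).trans t.2

lemma extEq_finMem_iff {a b : Fin N} : ExtEq (finMem N) a b ↔ a = b := by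
  refine ⟨fun h => Fin.ext ?_, fun h => h ▸ fun _ => Iff.rfl⟩
  exact Nat.eq_of_testBit_eq_of_lt (fun _ => a.lt_of_testBit_eq_true)
    (fun _ => b.lt_of_testBit_eq_true) fun k hk => Bool.eq_iff_iff.2 (h ⟨k, hk⟩)

lemma isPair_finMem_iff {p x y : Fin N} : IsPair (finMem N) p x y ↔ p.1 = ackPair x y := by
  simp only [IsPair, extEq_finMem_iff]
  constructor
  · intro h
    refine Nat.eq_of_testBit_eq_of_lt (fun _ => p.lt_of_testBit_eq_true) (fun k hk => ?_)
      fun k hk => Bool.eq_iff_iff.2 ?_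
    · rcases testBit_ackPair.1 hk with rfl | rfl <;> simp
    · simpa [finMem, Fin.ext_iff] using h ⟨k, hk⟩
  · intro h a
    simp [finMem, h, Fin.ext_iff]

lemma isOPair_finMem_iff {t x y : Fin N} : IsOPair (finMem N) t x y ↔ t.1 = ackOPair x y := by
  simp only [IsOPair, isPair_finMem_iff]
  refine ⟨fun ⟨a, b, ha, hb, ht⟩ => by rw [ht, ha, hb]; rfl, fun ht => ?_⟩
  have hlt : ∀ k, (ackOPair x y).testBit k = true → k < N := fun k hk =>
    t.lt_of_testBit_eq_true (ht ▸ hk)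
  exact ⟨⟨_, hlt _ (testBit_ackPair.2 (Or.inl rfl))⟩,
    ⟨_, hlt _ (testBit_ackPair.2 (Or.inr rfl))⟩, rfl, rfl, ht⟩

lemma isTuple_finMem_iff {l : List (Fin N)} {t : Fin N} :
    IsTuple (finMem N) t l ↔ t.1 = ackTuple (l.map Fin.val) := by
  induction l generalizing t with
  | nil =>
    simp only [IsTuple, finMem, List.map_nil, ackTuple]
    refine ⟨fun h => ?_, fun h a => by simp [h]⟩
    exact Nat.eq_of_testBit_eq_of_lt (fun _ => t.lt_of_testBit_eq_true) (by simp)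
      fun k hk => by simpa using h ⟨k, hk⟩
  | cons x l ih =>
    simp only [IsTuple, ih, isOPair_finMem_iff, List.map_cons, ackTuple]
    refine ⟨fun ⟨p, ht, hp⟩ => hp ▸ ht,
      fun ht => ⟨⟨ackTuple (l.map Fin.val), ?_⟩, ht, rfl⟩⟩
    have hpair : ackPair x.1 (ackTuple (l.map Fin.val)) < N :=
      t.lt_of_testBit_eq_true (ht ▸ by simp [ackOPair])
    exact (Nat.lt_of_testBit_eq_true (testBit_ackPair.2 (Or.inr rfl))).trans hpair

lemma tupleIn_finMem_iff {l : List (Fin N)} {r : Fin N} :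
    TupleIn (finMem N) l r ↔ r.1.testBit (ackTuple (l.map Fin.val)) = true := by
  simp only [TupleIn, isTuple_finMem_iff, finMem]
  exact ⟨fun ⟨t, ht, hr⟩ => ht ▸ hr,
    fun hr => ⟨⟨_, r.lt_of_testBit_eq_true hr⟩, rfl, hr⟩⟩

end

theorem reln_hfs_general {X : Type} (x₀ : X)
    (lX : List X) (hlX : ∀ x : X, x ∈ lX)
    (n : ℕ) (R : (Fin n → X) → Prop) :
    ∃ (Y : Type) (lY : List Y) (mem : Y → Y → Prop) (d r : Y)
      (i : X → Y) (s : Y → X),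
      (∀ y : Y, y ∈ lY) ∧
      (∃ g : Y → Y → Bool, ∀ a b : Y, mem a b ↔ g a b = true) ∧
      (∀ x : X, mem (i x) d) ∧
      (∀ y : Y, mem y d → ∃ x : X, y = i x) ∧
      (∀ v : Fin n → X,
        R v ↔ TupleIn mem ((List.finRange n).map (fun j => i (v j))) r) := by
  classical
  have := Fintype.ofList lX hlX
  let e : X → ℕ := fun x => Fintype.equivFin X x
  have he : e.Injective := Fin.val_injective.comp (Fintype.equivFin X).injective
  let code (v : Fin n → X) : ℕ := ackTuple (List.ofFn (e ∘ v))
  have hcode : code.Injective := fun _ _ h =>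
    he.comp_left (List.ofFn_injective (ackTuple_injective h))
  let dN := ackSet (lX.map e)
  let rN := ackSet ((Finset.univ.filter R).toList.map code)
  let N := max dN rN + 1
  have he_mem (x : X) : dN.testBit (e x) = true :=
    testBit_ackSet.2 (List.mem_map_of_mem (hlX x))
  have he_lt (x : X) : e x < N := (Nat.lt_of_testBit_eq_true (he_mem x)).trans_le (by omega)
  refine ⟨Fin N, List.finRange N, finMem N, ⟨dN, by omega⟩, ⟨rN, by omega⟩,
    fun x => ⟨e x, he_lt x⟩, fun _ => x₀, List.mem_finRange, ⟨fun a b => b.1.testBit a.1,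
    fun _ _ => Iff.rfl⟩, he_mem, fun y hy => ?_, fun v => ?_⟩
  · obtain ⟨x, -, hx⟩ := List.mem_map.1 (testBit_ackSet.1 hy)
    exact ⟨x, Fin.ext hx.symm⟩
  · have hv : ackTuple (((List.finRange n).map fun j =>
        (⟨e (v j), he_lt _⟩ : Fin N)).map Fin.val) = code v := by
      simp only [code, List.ofFn_eq_map, List.map_map]
      rfl
    rw [tupleIn_finMem_iff, hv, testBit_ackSet]
    simp [hcode.eq_iff]

/-- Hereditarily finite set encoding of an `n`-ary decidable relation on a
finite, discrete, inhabited type. -/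
theorem reln_hfs {X : Type} [DecidableEq X] (x₀ : X)
    (lX : List X) (hlX : ∀ x : X, x ∈ lX)
    (n : ℕ) (R : (Fin n → X) → Prop)
    (hR : ∃ g : (Fin n → X) → Bool, ∀ v, R v ↔ g v = true) :
    ∃ (Y : Type) (lY : List Y) (mem : Y → Y → Prop) (d r : Y)
      (i : X → Y) (s : Y → X),
      (∀ y : Y, y ∈ lY) ∧
      (∃ g : Y → Y → Bool, ∀ a b : Y, mem a b ↔ g a b = true) ∧
      (∀ x : X, mem (i x) d) ∧
      (∀ y : Y, mem y d → ∃ x : X, y = i x) ∧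
      (∀ v : Fin n → X,
        R v ↔ TupleIn mem ((List.finRange n).map (fun j => i (v j))) r) :=
  reln_hfs_general x₀ lX hlX n R
end
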